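/- Let u be a nonempty finite binary word with length ℓ and height h, and regard C(u) := φ(u)/(2^ℓ − 3^h) as an element of ℤ₂ (2^ℓ − 3^h is odd, hence a unit in ℤ₂). Then T^ℓ(C(u)) = C(u), and the parity vector of C(u) is the purely periodic infinite word u^∞ = uuu⋯ whose k-th digit is the (k mod ℓ)-th digit of u. -/

import Mathlib

/-- Height of a finite binary word: the number of `1`s (`true`s). -/
def wordHeight (u : List Bool) : ℕ := u.count true

/-- Auxiliary function realizing the recursion of `φ` on the reversed word. -/
def phiAux : List Bool → ℕ
  | [] => 0
  | b :: r => if b then 3 * phiAux r + 2 ^ r.length else phiAux r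

/-- The function `φ` on finite binary words: `φ(ε)=0`, `φ(u0)=φ(u)`,
`φ(u1)=3φ(u)+2^{ℓ(u)}`. -/
def phi (u : List Bool) : ℕ := phiAux u.reverse

/-!
With `D = 2^ℓ(u) − 3^h(u)`, which is odd, `C(bv) ≡ b (mod 2)` because `φ(bv) = 2φ(v) + b·3^h(v)`.
Applying the branch of `T` selected by `b` turns `φ(bv)` into `φ(vb)` over the same denominator
(rotation preserves both length and height), so `T` acts on the points `C(u)` as the cyclic
shift of `u`. Hence `T^k(C(u)) = C(u rotated by k)`, which gives both claims.
-/

lemma phiAux_append_singleton (l : List Bool) (b : Bool) :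
    phiAux (l ++ [b]) = 2 * phiAux l + (if b then 3 ^ l.count true else 0) := by
  induction l with
  | nil => cases b <;> simp [phiAux]
  | cons c l ih =>
    cases c <;> cases b <;> simp [phiAux, ih, pow_succ] <;> ring

lemma phi_cons (b : Bool) (v : List Bool) :
    phi (b :: v) = 2 * phi v + (if b then 3 ^ wordHeight v else 0) := by
  simp [phi, wordHeight, phiAux_append_singleton, List.count_reverse]

lemma phi_append_singleton (v : List Bool) (b : Bool) :
    phi (v ++ [b]) = if b then 3 * phi v + 2 ^ v.length else phi v := by
  simp [phi, phiAux]

lemma wordHeight_rotate (u : List Bool) (n : ℕ) : wordHeight (u.rotate n) = wordHeight u :=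
  (u.rotate_perm n).count_eq true

lemma List.headD_rotate {α : Type*} (l : List α) (n : ℕ) (d : α) :
    (l.rotate n).headD d = l.getD (n % l.length) d := by
  rcases eq_or_ne l [] with rfl | hl
  · simp
  · have hn : n % l.length < l.length := Nat.mod_lt _ (List.length_pos_iff.mpr hl)
    rw [← l.rotate_mod, List.headD_eq_head?_getD, List.head?_rotate hn, List.getD_eq_getElem?_getD]

namespace PadicInt

variable {p : ℕ} [Fact p.Prime]

lemma isUnit_of_toZMod_ne_zero {x : ℤ_[p]} (h : toZMod x ≠ 0) : IsUnit x := by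
  by_contra hx
  exact h (RingHom.mem_ker.mp (ker_toZMod (p := p) ▸ hx))

lemma toZMod_inverse_of_toZMod_eq_one {x : ℤ_[p]} (h : toZMod x = 1) :
    toZMod (Ring.inverse x) = 1 := by
  have hx := congrArg toZMod
    (Ring.mul_inverse_cancel x (isUnit_of_toZMod_ne_zero (h ▸ one_ne_zero)))
  rwa [map_mul, h, one_mul, map_one] at hx

end PadicInt

lemma toZMod_two_pow_sub_three_pow {n : ℕ} (hn : n ≠ 0) (m : ℕ) :
    PadicInt.toZMod ((2 : ℤ_[2]) ^ n - 3 ^ m) = 1 := by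
  simp [map_ofNat, (by decide : (2 : ZMod 2) = 0), (by decide : (3 : ZMod 2) = 1), zero_pow hn]

-- The point `C(u)` of the header.
noncomputable def cycleValue (u : List Bool) : ℤ_[2] :=
  (phi u : ℤ_[2]) * Ring.inverse ((2 : ℤ_[2]) ^ u.length - (3 : ℤ_[2]) ^ wordHeight u)

lemma cycleValue_nil : cycleValue [] = 0 := by
  simp [cycleValue, phi, phiAux]

lemma toZMod_cycleValue (u : List Bool) :
    PadicInt.toZMod (cycleValue u) = if u.headD false then 1 else 0 := by
  rcases u with _ | ⟨b, v⟩
  · simp [cycleValue_nil]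
  · rw [cycleValue, map_mul, PadicInt.toZMod_inverse_of_toZMod_eq_one
      (toZMod_two_pow_sub_three_pow (by simp) _), mul_one, map_natCast, phi_cons]
    cases b <;> simp [(by decide : (2 : ZMod 2) = 0), (by decide : (3 : ZMod 2) = 1)]

lemma cycleValue_rotate (u : List Bool) (n : ℕ) :
    cycleValue (u.rotate n) =
      (phi (u.rotate n) : ℤ_[2]) * Ring.inverse ((2 : ℤ_[2]) ^ u.length - 3 ^ wordHeight u) := by
  rw [cycleValue, List.length_rotate, wordHeight_rotate]

section CollatzMap

variable {T : ℤ_[2] → ℤ_[2]}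
  (hT : ∀ x : ℤ_[2], 2 * T x = if PadicInt.toZMod x = 1 then 3 * x + 1 else x)
include hT

lemma map_cycleValue (u : List Bool) : T (cycleValue u) = cycleValue (u.rotate 1) := by
  rcases u with _ | ⟨b, v⟩
  · simpa [cycleValue_nil] using hT 0
  refine mul_left_cancel₀ (two_ne_zero : (2 : ℤ_[2]) ≠ 0) ?_
  rw [hT, toZMod_cycleValue, cycleValue_rotate, List.rotate_cons_succ, List.rotate_zero,
    phi_append_singleton, cycleValue]
  set D : ℤ_[2] := 2 ^ (b :: v).length - 3 ^ wordHeight (b :: v)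
  have hD : D * Ring.inverse D = 1 := Ring.mul_inverse_cancel D
    (PadicInt.isUnit_of_toZMod_ne_zero (by simp [D, toZMod_two_pow_sub_three_pow]))
  cases b
  · simp only [List.headD_cons, Bool.false_eq_true, if_false, zero_ne_one, phi_cons, add_zero]
    push_cast
    ring
  · have key : 3 * (phi (true :: v) : ℤ_[2]) + D = 2 * (3 * phi v + 2 ^ v.length) := by
      simp only [D, phi_cons, if_true, wordHeight, List.length_cons, List.count_cons_self]
      push_cast
      ring
    simp only [List.headD_cons, if_true]
    push_cast
    linear_combination Ring.inverse D * key - hD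

lemma iterate_cycleValue (u : List Bool) (k : ℕ) :
    T^[k] (cycleValue u) = cycleValue (u.rotate k) := by
  induction k with
  | zero => simp
  | succ k ih => rw [Function.iterate_succ_apply', ih, map_cycleValue hT, List.rotate_rotate]

end CollatzMap

theorem stmt7_general (T : ℤ_[2] → ℤ_[2])
    (hT : ∀ x : ℤ_[2], 2 * T x = if PadicInt.toZMod x = 1 then 3 * x + 1 else x)
    (u : List Bool) :
    T^[u.length] ((phi u : ℤ_[2]) *
        Ring.inverse ((2 : ℤ_[2]) ^ u.length - (3 : ℤ_[2]) ^ wordHeight u)) =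
      (phi u : ℤ_[2]) * Ring.inverse ((2 : ℤ_[2]) ^ u.length - (3 : ℤ_[2]) ^ wordHeight u) ∧
    ∀ k : ℕ,
      PadicInt.toZMod (T^[k] ((phi u : ℤ_[2]) *
          Ring.inverse ((2 : ℤ_[2]) ^ u.length - (3 : ℤ_[2]) ^ wordHeight u))) =
        (if u.getD (k % u.length) false then 1 else 0) := by
  change T^[u.length] (cycleValue u) = cycleValue u ∧
    ∀ k, PadicInt.toZMod (T^[k] (cycleValue u)) = if u.getD (k % u.length) false then 1 else 0
  refine ⟨?_, fun k => ?_⟩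
  · rw [iterate_cycleValue hT, List.rotate_length]
  · rw [iterate_cycleValue hT, toZMod_cycleValue, List.headD_rotate]

/-- If `T` is the 3x+1 map on `ℤ₂` and `u` is a nonempty finite binary word of
length `ℓ` and height `h`, then `C(u) = φ(u)·(2^ℓ − 3^h)⁻¹ ∈ ℤ₂` satisfies
`T^ℓ(C(u)) = C(u)`, and the parity vector of `C(u)` is the purely periodic word
`u^∞`: its `k`-th digit `T^k(C(u)) mod 2` equals the `(k mod ℓ)`-th digit of `u`. -/
theorem stmt7 (T : ℤ_[2] → ℤ_[2])
    (hT : ∀ x : ℤ_[2], 2 * T x = if PadicInt.toZMod x = 1 then 3 * x + 1 else x)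
    (u : List Bool) (hu : u ≠ []) :
    T^[u.length] ((phi u : ℤ_[2]) *
        Ring.inverse ((2 : ℤ_[2]) ^ u.length - (3 : ℤ_[2]) ^ wordHeight u)) =
      (phi u : ℤ_[2]) * Ring.inverse ((2 : ℤ_[2]) ^ u.length - (3 : ℤ_[2]) ^ wordHeight u) ∧
    ∀ k : ℕ,
      PadicInt.toZMod (T^[k] ((phi u : ℤ_[2]) *
          Ring.inverse ((2 : ℤ_[2]) ^ u.length - (3 : ℤ_[2]) ^ wordHeight u))) =
        (if u.getD (k % u.length) false then 1 else 0) :=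
  stmt7_general T hT u
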